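/- arXiv:1908.10025 — 5 statements merged into one kernel-verified Lean document; each statement's English description precedes it below -/
import Mathlib

section
/- Let L, R, D be non-negative real numbers with L > 0, and λ a complex number with Im(λ) > 0 and |λ|² > D/L. Then z := R + L·λ + D/λ is nonzero and ρ := 1/z satisfies -Im(ρ)/|ρ| ≥ (1 - D/(L|λ|²)) / (|λ| + D/(L|λ|) + R/L) · Im(λ). -/
/-!
Write `z = R + Lλ + D/λ`. Since `Im (D/λ) = -D Im λ / |λ|²`, we get `Im z = Im λ (L - D/|λ|²) > 0`,
so `z ≠ 0`, and the triangle inequality gives `|z| ≤ R + L|λ| + D/|λ|`. Finally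
`-Im ρ / |ρ| = Im z / |z|` for `ρ = 1/z`, and dividing numerator and denominator of
`Im λ (L - D/|λ|²) / (R + L|λ| + D/|λ|)` by `L` gives the stated bound.
-/

open Complex

theorem Complex.neg_im_one_div_div_norm (w : ℂ) : -(1 / w).im / ‖1 / w‖ = w.im / ‖w‖ := by
  rw [one_div, inv_im, norm_inv, normSq_eq_norm_sq]
  rcases eq_or_ne w 0 with rfl | hw
  · simp
  · field_simp [norm_ne_zero_iff.mpr hw]

theorem Complex.im_ofReal_add_mul_add_div (R L D : ℝ) (lam : ℂ) :
    ((R : ℂ) + L * lam + D / lam).im = lam.im * (L - D / ‖lam‖ ^ 2) := by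
  simp only [add_im, ofReal_im, div_im, ofReal_re, im_ofReal_mul, zero_mul,
    zero_div, zero_sub, normSq_eq_norm_sq]
  ring

theorem Complex.norm_ofReal_add_mul_add_div_le {R L D : ℝ} (hR : 0 ≤ R) (hL : 0 ≤ L) (hD : 0 ≤ D)
    (lam : ℂ) : ‖(R : ℂ) + L * lam + D / lam‖ ≤ R + L * ‖lam‖ + D / ‖lam‖ := by
  calc ‖(R : ℂ) + L * lam + D / lam‖ ≤ ‖(R : ℂ)‖ + ‖(L : ℂ) * lam‖ + ‖(D : ℂ) / lam‖ :=
        norm_add₃_le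
    _ = R + L * ‖lam‖ + D / ‖lam‖ := by
        rw [norm_mul, norm_div, Complex.norm_of_nonneg hR, Complex.norm_of_nonneg hL,
          Complex.norm_of_nonneg hD]

theorem neg_im_div_abs_ge_large_im (L R D : ℝ) (hL : 0 < L) (hR : 0 ≤ R) (hD : 0 ≤ D)
    (lam : ℂ) (him : 0 < lam.im) (habs : (‖lam‖) ^ 2 > D / L) :
    (R : ℂ) + (L : ℂ) * lam + (D : ℂ) / lam ≠ 0 ∧
    ∀ z rho : ℂ, z = (R : ℂ) + (L : ℂ) * lam + (D : ℂ) / lam → rho = 1 / z →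
      -rho.im / ‖rho‖ ≥
        (1 - D / (L * (‖lam‖) ^ 2)) /
          (‖lam‖ + D / (L * ‖lam‖) + R / L) * lam.im := by
  have hlam : 0 < ‖lam‖ := norm_pos_iff.mpr fun h ↦ by simp [h] at him
  have hgap : 0 < L - D / ‖lam‖ ^ 2 := by
    rw [sub_pos, div_lt_iff₀ (by positivity)]
    rwa [gt_iff_lt, div_lt_iff₀ hL, mul_comm] at habs
  have him_pos : 0 < ((R : ℂ) + L * lam + D / lam).im := by
    rw [im_ofReal_add_mul_add_div]
    positivity
  have hz : (R : ℂ) + L * lam + D / lam ≠ 0 := fun h ↦ by simp [h] at him_pos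
  refine ⟨hz, ?_⟩
  rintro z rho rfl rfl
  have hrhs : (1 - D / (L * ‖lam‖ ^ 2)) / (‖lam‖ + D / (L * ‖lam‖) + R / L) * lam.im
      = lam.im * (L - D / ‖lam‖ ^ 2) / (R + L * ‖lam‖ + D / ‖lam‖) := by
    field_simp
    ring
  rw [ge_iff_le, neg_im_one_div_div_norm, hrhs, ← im_ofReal_add_mul_add_div]
  exact div_le_div_of_nonneg_left him_pos.le (norm_pos_iff.mpr hz)
    (norm_ofReal_add_mul_add_div_le hR hL.le hD lam)
end

section
/- Let L, R, D be non-negative real numbers with L > 0, and λ a complex number with Im(λ) > 0 and |λ|² < D/L. Then z := R + L·λ + D/λ is nonzero and ρ := 1/z satisfies Im(ρ)/|ρ| ≥ (D/(L|λ|²) - 1) / (|λ| + D/(L|λ|) + R/L) · Im(λ). -/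
/-! Since `Im (D / λ) = -D Im λ / |λ|²`, we get `Im z = Im λ (L - D / |λ|²) < 0`, so `z ≠ 0`.
For any `w`, `Im (1/w) / |1/w| = -Im w / |w|`, and the triangle inequality
`|z| ≤ R + L |λ| + D / |λ|` gives the bound, which is the stated one scaled by `L`. -/

namespace Complex

theorem im_inv_div_norm_inv (w : ℂ) : w⁻¹.im / ‖w⁻¹‖ = -w.im / ‖w‖ := by
  rcases eq_or_ne w 0 with rfl | hw
  · simp
  rw [inv_im, norm_inv, normSq_eq_norm_sq]
  field_simp

theorem div_le_im_inv_div_norm_inv {w : ℂ} {B : ℝ} (hw : 0 < -w.im) (hB : ‖w‖ ≤ B) :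
    -w.im / B ≤ w⁻¹.im / ‖w⁻¹‖ := by
  have hw0 : 0 < ‖w‖ := norm_pos_iff.mpr fun h => by simp [h] at hw
  rw [im_inv_div_norm_inv]
  exact div_le_div_of_nonneg_left hw.le hw0 hB

theorem im_ofReal_div (D : ℝ) (z : ℂ) : ((D : ℂ) / z).im = -(D * z.im / ‖z‖ ^ 2) := by
  rw [div_im, ← normSq_eq_norm_sq]
  simp

theorem im_add_mul_add_div (R L D : ℝ) (z : ℂ) :
    ((R : ℂ) + L * z + D / z).im = z.im * (L - D / ‖z‖ ^ 2) := by
  rw [add_im, add_im, im_ofReal_div, ofReal_im, im_ofReal_mul]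
  ring

theorem norm_add_mul_add_div_le {R L D : ℝ} (hR : 0 ≤ R) (hL : 0 ≤ L) (hD : 0 ≤ D) (z : ℂ) :
    ‖(R : ℂ) + L * z + D / z‖ ≤ R + L * ‖z‖ + D / ‖z‖ := by
  calc ‖(R : ℂ) + L * z + D / z‖ ≤ ‖(R : ℂ)‖ + ‖(L : ℂ) * z‖ + ‖(D : ℂ) / z‖ := norm_add₃_le
    _ = R + L * ‖z‖ + D / ‖z‖ := by
      rw [norm_mul, norm_div, Complex.norm_of_nonneg hR, Complex.norm_of_nonneg hL,
        Complex.norm_of_nonneg hD]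

end Complex

theorem im_div_abs_ge_small_im_general (L R D : ℝ) (hL : 0 < L) (hR : 0 ≤ R)
    (lam : ℂ) (him : 0 < lam.im) (habs : (‖lam‖) ^ 2 < D / L) :
    (R : ℂ) + (L : ℂ) * lam + (D : ℂ) / lam ≠ 0 ∧
    ∀ z rho : ℂ, z = (R : ℂ) + (L : ℂ) * lam + (D : ℂ) / lam → rho = 1 / z →
      rho.im / ‖rho‖ ≥
        (D / (L * (‖lam‖) ^ 2) - 1) /
          (‖lam‖ + D / (L * ‖lam‖) + R / L) * lam.im := by
  have ha : 0 < ‖lam‖ := norm_pos_iff.mpr fun h => by simp [h] at him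
  have hLD : L * ‖lam‖ ^ 2 < D := by rwa [lt_div_iff₀ hL, mul_comm] at habs
  have hD : 0 < D := lt_of_le_of_lt (by positivity) hLD
  have him_neg : 0 < -((R : ℂ) + L * lam + D / lam).im := by
    rw [Complex.im_add_mul_add_div, ← mul_neg, neg_sub]
    exact mul_pos him (sub_pos.mpr ((lt_div_iff₀ (by positivity)).mpr hLD))
  refine ⟨fun h => by simp [h] at him_neg, ?_⟩
  rintro z rho rfl rfl
  have hbound : (D / (L * ‖lam‖ ^ 2) - 1) / (‖lam‖ + D / (L * ‖lam‖) + R / L) * lam.im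
      = -((R : ℂ) + L * lam + D / lam).im / (R + L * ‖lam‖ + D / ‖lam‖) := by
    rw [Complex.im_add_mul_add_div]
    field_simp
    ring
  rw [ge_iff_le, hbound, one_div]
  exact Complex.div_le_im_inv_div_norm_inv him_neg
    (Complex.norm_add_mul_add_div_le hR hL.le hD.le lam)

theorem im_div_abs_ge_small_im (L R D : ℝ) (hL : 0 < L) (hR : 0 ≤ R) (hD : 0 ≤ D)
    (lam : ℂ) (him : 0 < lam.im) (habs : (‖lam‖) ^ 2 < D / L) :
    (R : ℂ) + (L : ℂ) * lam + (D : ℂ) / lam ≠ 0 ∧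
    ∀ z rho : ℂ, z = (R : ℂ) + (L : ℂ) * lam + (D : ℂ) / lam → rho = 1 / z →
      rho.im / ‖rho‖ ≥
        (D / (L * (‖lam‖) ^ 2) - 1) /
          (‖lam‖ + D / (L * ‖lam‖) + R / L) * lam.im :=
  im_div_abs_ge_small_im_general L R D hL hR lam him habs
end

section
/- Let R, L, D be non-negative real numbers with R + L + D > 0, and λ a complex number with Re(λ) > 0. Then z := R + L·λ + D/λ satisfies |z| ≥ (R + L + D) · Re(λ) / (1 + |λ|²). -/
/-! Since `‖z‖ ≥ re z = R + L re λ + D re λ / ‖λ‖²`, it suffices to bound `re λ / (1 + ‖λ‖²)`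
by `1`, by `re λ` and by `re λ / ‖λ‖²`, one bound for each of the three terms. -/

namespace Complex

lemma re_div_one_add_sq_norm_le_one (z : ℂ) : z.re / (1 + ‖z‖ ^ 2) ≤ 1 := by
  have hz : z.re ≤ ‖z‖ := re_le_norm z
  rw [div_le_one (by positivity)]
  nlinarith [sq_nonneg (‖z‖ - 1)]

lemma re_div_one_add_sq_norm_le_re {z : ℂ} (hz : 0 ≤ z.re) :
    z.re / (1 + ‖z‖ ^ 2) ≤ z.re :=
  div_le_self hz (le_add_of_nonneg_right (by positivity))

lemma re_div_one_add_sq_norm_le_re_div_sq_norm {z : ℂ} (hz : 0 < z.re) :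
    z.re / (1 + ‖z‖ ^ 2) ≤ z.re / ‖z‖ ^ 2 := by
  have hz0 : z ≠ 0 := by rintro rfl; simp at hz
  exact div_le_div_of_nonneg_left hz.le (by positivity) (by linarith)

lemma re_ofReal_div (r : ℝ) (z : ℂ) : ((r : ℂ) / z).re = r * (z.re / ‖z‖ ^ 2) := by
  rw [div_eq_mul_inv, re_ofReal_mul, inv_re, normSq_eq_norm_sq]

end Complex

theorem abs_z_lower_bound_general (R L D : ℝ) (hR : 0 ≤ R) (hL : 0 ≤ L) (hD : 0 ≤ D)
    (lam : ℂ) (hre : 0 < lam.re) :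
    ‖(R : ℂ) + (L : ℂ) * lam + (D : ℂ) / lam‖ ≥
      (R + L + D) * lam.re / (1 + ‖lam‖ ^ 2) := by
  set q := lam.re / (1 + ‖lam‖ ^ 2)
  calc (R + L + D) * lam.re / (1 + ‖lam‖ ^ 2) = R * q + L * q + D * q := by ring
    _ ≤ R * 1 + L * lam.re + D * (lam.re / ‖lam‖ ^ 2) := by
      gcongr
      · exact Complex.re_div_one_add_sq_norm_le_one lam
      · exact Complex.re_div_one_add_sq_norm_le_re hre.le
      · exact Complex.re_div_one_add_sq_norm_le_re_div_sq_norm hre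
    _ = ((R : ℂ) + (L : ℂ) * lam + (D : ℂ) / lam).re := by
      simp only [Complex.add_re, Complex.ofReal_re, Complex.re_ofReal_mul,
        Complex.re_ofReal_div, mul_one]
    _ ≤ ‖(R : ℂ) + (L : ℂ) * lam + (D : ℂ) / lam‖ := Complex.re_le_norm _

theorem abs_z_lower_bound (R L D : ℝ) (hR : 0 ≤ R) (hL : 0 ≤ L) (hD : 0 ≤ D)
    (hpos : 0 < R + L + D) (lam : ℂ) (hre : 0 < lam.re) :
    ‖(R : ℂ) + (L : ℂ) * lam + (D : ℂ) / lam‖ ≥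
      (R + L + D) * lam.re / (1 + ‖lam‖ ^ 2) :=
  abs_z_lower_bound_general R L D hR hL hD lam hre
end

section
/- Let (V, ρ, a, B) be a finite network with λ fixed, and suppose v₁ and v₂ are two solutions of the Dirichlet problem Δ_ρ v = 0 on V \ B₀, v = 0 on B, v(a) = 1, where B₀ = B ∪ {a}. Then Σ_{x ∈ V}(1 - v₁(x))ρ_{xa} = Σ_{x ∈ V}(1 - v₂(x))ρ_{xa}; that is, the effective admittance does not depend on the choice of solution. -/
theorem admittance_well_defined {V : Type*} [Fintype V] [DecidableEq V]
    (rho : V → V → ℂ) (hsym : ∀ x y, rho x y = rho y x)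
    (a : V) (B : Finset V) (haB : a ∉ B) (hBne : B.Nonempty)
    (v1 v2 : V → ℂ)
    (h1harm : ∀ x : V, x ∉ insert a B → ∑ y : V, (v1 y - v1 x) * rho x y = 0)
    (h1B : ∀ x ∈ B, v1 x = 0) (h1a : v1 a = 1)
    (h2harm : ∀ x : V, x ∉ insert a B → ∑ y : V, (v2 y - v2 x) * rho x y = 0)
    (h2B : ∀ x ∈ B, v2 x = 0) (h2a : v2 a = 1) :
    ∑ x : V, (1 - v1 x) * rho x a = ∑ x : V, (1 - v2 x) * rho x a := by
  -- Green's formula: ∑ v1 Δv2 = ∑ v2 Δv1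
  have L : ∀ (u w : V → ℂ), ∑ x : V, u x * (∑ y : V, (w y - w x) * rho x y)
      = (∑ x : V, ∑ y : V, u x * w y * rho x y)
        - ∑ x : V, (∑ y : V, rho x y) * (u x * w x) := by
    intro u w
    rw [← Finset.sum_sub_distrib]
    apply Finset.sum_congr rfl
    intro x _
    rw [Finset.mul_sum, Finset.sum_mul, ← Finset.sum_sub_distrib]
    apply Finset.sum_congr rfl
    intro y _
    ring
  have key : ∑ x : V, v1 x * (∑ y : V, (v2 y - v2 x) * rho x y)
           = ∑ x : V, v2 x * (∑ y : V, (v1 y - v1 x) * rho x y) := by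
    rw [L, L]
    congr 1
    · rw [Finset.sum_comm]
      apply Finset.sum_congr rfl
      intro x _
      apply Finset.sum_congr rfl
      intro y _
      rw [hsym y x]; ring
    · apply Finset.sum_congr rfl
      intro x _
      ring
  have S1 : ∑ x : V, v1 x * (∑ y : V, (v2 y - v2 x) * rho x y)
      = ∑ y : V, (v2 y - 1) * rho a y := by
    rw [Finset.sum_eq_single a]
    · rw [h1a, one_mul, h2a]
    · intro x _ hxa
      by_cases hxB : x ∈ B
      · rw [h1B x hxB, zero_mul]
      · rw [h2harm x (by simp [hxa, hxB]), mul_zero]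
    · simp
  have S2 : ∑ x : V, v2 x * (∑ y : V, (v1 y - v1 x) * rho x y)
      = ∑ y : V, (v1 y - 1) * rho a y := by
    rw [Finset.sum_eq_single a]
    · rw [h2a, one_mul, h1a]
    · intro x _ hxa
      by_cases hxB : x ∈ B
      · rw [h2B x hxB, zero_mul]
      · rw [h1harm x (by simp [hxa, hxB]), mul_zero]
    · simp
  have e1 : ∑ x : V, (1 - v1 x) * rho x a = -∑ x : V, (v1 x - 1) * rho a x := by
    rw [← Finset.sum_neg_distrib]
    apply Finset.sum_congr rfl
    intro x _
    rw [hsym x a]; ring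
  have e2 : ∑ x : V, (1 - v2 x) * rho x a = -∑ x : V, (v2 x - 1) * rho a x := by
    rw [← Finset.sum_neg_distrib]
    apply Finset.sum_congr rfl
    intro x _
    rw [hsym x a]; ring
  rw [e1, e2, ← S1, ← S2, key]
end

section
/- Let v be a solution of the Dirichlet problem on a finite network (Δ_ρ v = 0 on V \ B₀, v|_B = 0, v(a) = 1), and u : V → ℂ any function with u(a) = 1 and u|_B = 0. Then Σ_{x ∈ V}(1 - v(x))ρ_{xa} = (1/2)·Σ_{x,y ∈ V}(v(y)-v(x))(u(y)-u(x))ρ_{xy}. -/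
theorem admittance_formula {V : Type*} [Fintype V] [DecidableEq V]
    (rho : V → V → ℂ) (hsym : ∀ x y, rho x y = rho y x)
    (a : V) (B : Finset V) (haB : a ∉ B)
    (v : V → ℂ)
    (hharm : ∀ x : V, x ∉ insert a B → ∑ y : V, (v y - v x) * rho x y = 0)
    (hvB : ∀ x ∈ B, v x = 0) (hva : v a = 1)
    (u : V → ℂ) (hua : u a = 1) (huB : ∀ x ∈ B, u x = 0) :
    ∑ x : V, (1 - v x) * rho x a =
      (1 / 2) * ∑ x : V, ∑ y : V, (v y - v x) * (u y - u x) * rho x y := by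
  have hBa : ∀ x ∈ Finset.univ, x ≠ a →
      u x * ∑ y : V, (v y - v x) * rho x y = 0 := by
    intro x _ hx
    by_cases hxB : x ∈ B
    · simp [huB x hxB]
    · have hx' : x ∉ insert a B := by simp [hx, hxB]
      rw [hharm x hx', mul_zero]
  have hone : ∑ x : V, u x * ∑ y : V, (v y - v x) * rho x y
      = ∑ y : V, (v y - 1) * rho a y := by
    rw [Finset.sum_eq_single_of_mem a (Finset.mem_univ a) hBa]
    simp [hua, hva]
  have hS2 : ∑ x : V, ∑ y : V, (v y - v x) * u x * rho x y
      = ∑ y : V, (v y - 1) * rho a y := by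
    rw [← hone]
    refine Finset.sum_congr rfl fun x _ => ?_
    rw [Finset.mul_sum]
    exact Finset.sum_congr rfl fun y _ => by ring
  have hswap : ∑ x : V, ∑ y : V, (v y - v x) * u y * rho x y
      = - ∑ x : V, ∑ y : V, (v y - v x) * u x * rho x y := by
    rw [Finset.sum_comm, ← Finset.sum_neg_distrib]
    refine Finset.sum_congr rfl fun x _ => ?_
    rw [← Finset.sum_neg_distrib]
    refine Finset.sum_congr rfl fun y _ => ?_
    rw [hsym y x]; ring
  have expand : ∑ x : V, ∑ y : V, (v y - v x) * (u y - u x) * rho x y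
      = (∑ x : V, ∑ y : V, (v y - v x) * u y * rho x y)
        - ∑ x : V, ∑ y : V, (v y - v x) * u x * rho x y := by
    rw [← Finset.sum_sub_distrib]
    refine Finset.sum_congr rfl fun x _ => ?_
    rw [← Finset.sum_sub_distrib]
    exact Finset.sum_congr rfl fun y _ => by ring
  rw [expand, hswap, hS2]
  have hL : ∑ x : V, (1 - v x) * rho x a = ∑ x : V, (1 - v x) * rho a x := by
    exact Finset.sum_congr rfl fun x _ => by rw [hsym x a]
  rw [hL]
  rw [neg_sub_left, ← two_mul, Finset.mul_sum, ← Finset.sum_neg_distrib, Finset.mul_sum]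
  exact Finset.sum_congr rfl fun x _ => by ring
end
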